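/- arXiv:2402.06705 — 2 statements merged into one kernel-verified Lean document; each statement's English description precedes it below -/
import Mathlib

section
/- Let G be a finite group and x, y ∈ G two p-elements (for the same prime p) with coprime conjugacy class sizes |x^G| and |y^G|. Then xy = yx. -/
def classSet {G : Type*} [Group G] (x : G) : Set G := {y | IsConj x y}

noncomputable def classSize {G : Type*} [Group G] (x : G) : ℕ := Nat.card (classSet x)

/-!
By coprimality `p` fails to divide one of the class sizes, say `|x^G| = |G : C_G(x)|`.
Coprimality also gives `|C_G(y) : C_G(x) ∩ C_G(y)| = |G : C_G(x)|`, so inside `C_G(y)` the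
subgroup `C_G(x) ∩ C_G(y)` has index prime to `p`. Now `y` is a central `p`-element of `C_G(y)`,
and a central `p`-element lies in every subgroup of index prime to `p`; hence `y ∈ C_G(x)`.
-/

theorem classSet_eq_orbit_conjAct {G : Type*} [Group G] (x : G) :
    classSet x = MulAction.orbit (ConjAct G) x := by
  ext g
  exact ⟨fun hg => ConjAct.mem_orbit_conjAct.mpr hg.symm,
    fun hg => (ConjAct.mem_orbit_conjAct.mp hg).symm⟩

theorem classSize_eq_index_centralizer {G : Type*} [Group G] (x : G) :
    classSize x = (Subgroup.centralizer {x}).index := by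
  rw [Subgroup.centralizer_eq_comap_stabilizer, classSize, classSet_eq_orbit_conjAct,
    Nat.card_coe_set_eq, ← MulAction.index_stabilizer]
  exact (Subgroup.index_comap_of_surjective _ ConjAct.toConjAct.surjective).symm

namespace Subgroup

/-- The `p`-group `⟨y⟩` acting on `G ⧸ L`, a set of size prime to `p`, fixes some coset `gL`;
as `y` is central, `y • gL = gL` means `y ∈ L`. -/
theorem mem_of_mem_center_of_not_dvd_index {G : Type*} [Group G] {p : ℕ} [Fact p.Prime]
    {y : G} {b : ℕ} (hy : orderOf y = p ^ b) (hc : y ∈ center G)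
    {L : Subgroup G} (hL : ¬ p ∣ L.index) : y ∈ L := by
  have hcard : Nat.card (zpowers y) = p ^ b := by rw [Nat.card_zpowers, hy]
  have : Finite (zpowers y) :=
    Nat.finite_of_card_ne_zero (hcard ▸ pow_ne_zero b (Fact.out : p.Prime).ne_zero)
  have hpgroup : IsPGroup p (zpowers y) := IsPGroup.iff_card.mpr ⟨b, hcard⟩
  obtain ⟨q, hq⟩ := hpgroup.nonempty_fixed_point_of_prime_not_dvd_card (G ⧸ L) hL
  obtain ⟨g, rfl⟩ := QuotientGroup.mk_surjective q
  have hfix : y • (g : G ⧸ L) = g := hq ⟨y, mem_zpowers y⟩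
  rw [MulAction.Quotient.smul_coe, QuotientGroup.eq, smul_eq_mul, mul_inv_rev,
    mem_center_iff.mp (inv_mem hc) g⁻¹, inv_mul_cancel_right] at hfix
  exact inv_mem_iff.mp hfix

theorem relIndex_eq_index_of_coprime {G : Type*} [Group G] {H K : Subgroup G}
    (hH : H.index ≠ 0) (h : H.index.Coprime K.index) : H.relIndex K = H.index := by
  have hdvd : H.index ∣ H.relIndex K * K.index := by
    rw [← inf_relIndex_right, relIndex_mul_index inf_le_right]
    exact index_dvd_of_le inf_le_left
  have hrel : H.relIndex K ≠ 0 := mt index_eq_zero_of_relIndex_eq_zero hH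
  refine le_antisymm ?_ (Nat.le_of_dvd (Nat.pos_of_ne_zero hrel) (h.dvd_of_dvd_mul_right hdvd))
  rw [← H.relIndex_top_right] at hH ⊢
  exact relIndex_le_of_le_right le_top hH

end Subgroup

open Subgroup in
theorem commute_of_coprime_index_centralizer {G : Type*} [Group G] {p : ℕ} [Fact p.Prime]
    {x y : G} {b : ℕ} (hy : orderOf y = p ^ b)
    (h : (centralizer {x}).index.Coprime (centralizer {y}).index)
    (hpx : ¬ p ∣ (centralizer {x}).index) : Commute x y := by
  set K := centralizer {y}
  have hyK : y ∈ K := mem_centralizer_singleton_iff.mpr rfl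
  have hy_center : (⟨y, hyK⟩ : K) ∈ center K :=
    mem_center_iff.mpr fun g => Subtype.ext (mem_centralizer_singleton_iff.mp g.2)
  have hindex : ((centralizer {x}).subgroupOf K).index = (centralizer {x}).index :=
    relIndex_eq_index_of_coprime (fun h0 => hpx (h0 ▸ dvd_zero p)) h
  have hy_mem : (⟨y, hyK⟩ : K) ∈ (centralizer {x}).subgroupOf K :=
    mem_of_mem_center_of_not_dvd_index (by rw [orderOf_mk, hy]) hy_center (hindex ▸ hpx)
  exact (mem_centralizer_singleton_iff.mp (mem_subgroupOf.mp hy_mem)).symm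

theorem stmt3_general {G : Type*} [Group G] (p : ℕ) (hp : p.Prime) (x y : G)
    (hx : ∃ a : ℕ, orderOf x = p ^ a) (hy : ∃ b : ℕ, orderOf y = p ^ b)
    (h : Nat.Coprime (classSize x) (classSize y)) :
    Commute x y := by
  have : Fact p.Prime := ⟨hp⟩
  obtain ⟨a, hxa⟩ := hx
  obtain ⟨b, hyb⟩ := hy
  rw [classSize_eq_index_centralizer, classSize_eq_index_centralizer] at h
  by_cases hpx : p ∣ (Subgroup.centralizer {x}).index
  · have hpy : ¬ p ∣ (Subgroup.centralizer {y}).index := fun hpy =>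
      hp.one_lt.ne' (Nat.eq_one_of_dvd_coprimes h hpx hpy)
    exact (commute_of_coprime_index_centralizer hxa h.symm hpy).symm
  · exact commute_of_coprime_index_centralizer hyb h hpx

theorem stmt3 {G : Type*} [Group G] [Finite G] (p : ℕ) (hp : p.Prime) (x y : G)
    (hx : ∃ a : ℕ, orderOf x = p ^ a) (hy : ∃ b : ℕ, orderOf y = p ^ b)
    (h : Nat.Coprime (classSize x) (classSize y)) :
    Commute x y :=
  stmt3_general p hp x y hx hy h
end

section
/- Let G be a finite group, N ⊴ G, and let B = b^G, C = c^G be noncentral G-conjugacy classes contained in N with gcd(|B|, |C|) = 1. Then the product set BC equals CB, BC is a single G-conjugacy class contained in N, and |BC| divides |B|·|C|. -/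
open Pointwise

/-!
The centralizers `H = C_G(b)` and `K = C_G(c)` have the coprime indices `|B|` and `|C|`,
hence `|G : H ∩ K| = |B| |C|` and `G = H K`. So for `x, y ∈ G` we can write `x⁻¹ y = h k`
with `h ∈ H`, `k ∈ K`, and then `b^x c^y = (b c)^(x h)`: the product `BC` is the class of
`b c`. As `H ∩ K` centralizes `b c`, `|(b c)^G|` divides `|G : H ∩ K| = |B| |C|`.
-/

namespace Subgroup

variable {G : Type*} [Group G] {H K : Subgroup G}

theorem index_inf_eq_mul_of_coprime [H.FiniteIndex] [K.FiniteIndex]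
    (hco : H.index.Coprime K.index) : (H ⊓ K).index = H.index * K.index :=
  le_antisymm index_inf_le <| Nat.le_of_dvd (Nat.pos_of_ne_zero FiniteIndex.index_ne_zero) <|
    hco.mul_dvd_of_dvd_of_dvd (index_dvd_of_le inf_le_left) (index_dvd_of_le inf_le_right)

theorem relIndex_eq_index_of_coprime_s7 [H.FiniteIndex] [K.FiniteIndex]
    (hco : H.index.Coprime K.index) : K.relIndex H = K.index := by
  refine Nat.eq_of_mul_eq_mul_right (Nat.pos_of_ne_zero (FiniteIndex.index_ne_zero (H := H))) ?_
  rw [← inf_relIndex_right, relIndex_mul_index inf_le_right, inf_comm,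
    index_inf_eq_mul_of_coprime hco, mul_comm]

/-- `H` acts transitively on `G ⧸ K`: the orbit of the trivial coset has size
`|H : H ∩ K| = |G : K|`. -/
theorem exists_mul_eq_of_coprime_index [H.FiniteIndex] [K.FiniteIndex]
    (hco : H.index.Coprime K.index) (g : G) : ∃ h ∈ H, ∃ k ∈ K, h * k = g := by
  have hsmul (h : H) : h • ((1 : G) : G ⧸ K) = ((h : G) : G ⧸ K) := by
    change (h : G) • ((1 : G) : G ⧸ K) = _
    rw [MulAction.Quotient.smul_coe, smul_eq_mul, mul_one]
  have hstab : MulAction.stabilizer H ((1 : G) : G ⧸ K) = K.subgroupOf H := by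
    ext h
    rw [mem_subgroupOf, MulAction.mem_stabilizer_iff, hsmul, QuotientGroup.eq, mul_one, inv_mem_iff]
  have horbit : MulAction.orbit H ((1 : G) : G ⧸ K) = Set.univ := by
    refine Set.eq_of_subset_of_ncard_le (Set.subset_univ _) ?_
    rw [Set.ncard_univ, ← MulAction.index_stabilizer, hstab, ← relIndex,
      relIndex_eq_index_of_coprime_s7 hco, index_eq_card]
  obtain ⟨h, hh⟩ := horbit.symm ▸ Set.mem_univ ((g : G) : G ⧸ K)
  exact ⟨h, h.2, (h : G)⁻¹ * g, QuotientGroup.eq.mp ((hsmul h).symm.trans hh),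
    mul_inv_cancel_left _ _⟩

end Subgroup

section ConjugacyClasses

open MulAction

variable {G : Type*} [Group G]

theorem classSet_eq_orbit (x : G) : classSet x = orbit (ConjAct G) x := by
  ext y
  rw [ConjAct.mem_orbit_conjAct, classSet, Set.mem_ofPred_eq, isConj_comm]

theorem classSize_eq_index (x : G) : classSize x = (stabilizer (ConjAct G) x).index := by
  rw [index_stabilizer, classSize, classSet_eq_orbit, Nat.card_coe_set_eq]

theorem classSet_mul_comm (b c : G) : classSet (b * c) = classSet (c * b) := by
  have hconj : IsConj (b * c) (c * b) := isConj_iff.mpr ⟨b⁻¹, by group⟩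
  ext z
  exact ⟨hconj.symm.trans, hconj.trans⟩

theorem coprime_index_stabilizer {b c : G} (hco : (classSize b).Coprime (classSize c)) :
    (stabilizer (ConjAct G) b).index.Coprime (stabilizer (ConjAct G) c).index := by
  rwa [← classSize_eq_index, ← classSize_eq_index]

variable [Finite G]

instance ConjAct.finite : Finite (ConjAct G) := ‹Finite G›

theorem classSet_mul_classSet_of_coprime {b c : G} (hco : (classSize b).Coprime (classSize c)) :
    classSet b * classSet c = classSet (b * c) := by
  simp only [classSet_eq_orbit]
  ext z
  constructor
  · rintro ⟨_, ⟨x, rfl⟩, _, ⟨y, rfl⟩, rfl⟩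
    obtain ⟨h, hh, k, hk, hhk⟩ :=
      Subgroup.exists_mul_eq_of_coprime_index (coprime_index_stabilizer hco) (x⁻¹ * y)
    refine ⟨x * h, ?_⟩
    have hy : y = x * h * k := by rw [mul_assoc, hhk, mul_inv_cancel_left]
    change (x * h) • (b * c) = x • b * y • c
    rw [hy, mul_smul (x * h) k, mem_stabilizer_iff.mp hk, smul_mul', mul_smul x h b,
      mem_stabilizer_iff.mp hh]
  · rintro ⟨g, rfl⟩
    exact ⟨g • b, mem_orbit b g, g • c, mem_orbit c g, (smul_mul' g b c).symm⟩

theorem classSize_mul_dvd_of_coprime {b c : G} (hco : (classSize b).Coprime (classSize c)) :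
    classSize (b * c) ∣ classSize b * classSize c := by
  have hle :
      stabilizer (ConjAct G) b ⊓ stabilizer (ConjAct G) c ≤ stabilizer (ConjAct G) (b * c) :=
    fun g ⟨hgb, hgc⟩ => by rw [mem_stabilizer_iff, smul_mul', hgb, hgc]
  simpa only [classSize_eq_index,
    Subgroup.index_inf_eq_mul_of_coprime (coprime_index_stabilizer hco)] using
    Subgroup.index_dvd_of_le hle

end ConjugacyClasses

theorem stmt7_general {G : Type*} [Group G] [Finite G] (N : Subgroup G)
    (b c : G) (hb : b ∈ N) (hc : c ∈ N)
    (h : Nat.Coprime (classSize b) (classSize c)) :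
    classSet b * classSet c = classSet c * classSet b ∧
    (∃ d ∈ N, classSet b * classSet c = classSet d) ∧
    Nat.card ↥(classSet b * classSet c) ∣ Nat.card ↥(classSet b) * Nat.card ↥(classSet c) := by
  have hBC := classSet_mul_classSet_of_coprime h
  refine ⟨?_, ⟨b * c, N.mul_mem hb hc, hBC⟩, ?_⟩
  · rw [hBC, classSet_mul_classSet_of_coprime h.symm, classSet_mul_comm]
  · rw [hBC]
    exact classSize_mul_dvd_of_coprime h

theorem stmt7 {G : Type*} [Group G] [Finite G] (N : Subgroup G) (hN : N.Normal)
    (b c : G) (hb : b ∈ N) (hc : c ∈ N)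
    (hbc : b ∉ Subgroup.center G) (hcc : c ∉ Subgroup.center G)
    (h : Nat.Coprime (classSize b) (classSize c)) :
    classSet b * classSet c = classSet c * classSet b ∧
    (∃ d ∈ N, classSet b * classSet c = classSet d) ∧
    Nat.card ↥(classSet b * classSet c) ∣ Nat.card ↥(classSet b) * Nat.card ↥(classSet c) :=
  stmt7_general N b c hb hc h
end
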